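/- arXiv:2311.15234 — 4 statements merged into one kernel-verified Lean document; each statement's English description precedes it below -/
import Mathlib

section
/- Let X be the Cantor space over a finite alphabet 𝒜. For a closed set K ⊆ X the following are equivalent: (1) K is upper computable, i.e. there exists a Σ₁ (r.e.) set W of finite words over 𝒜 such that X ∖ K = ⋃_{w ∈ W} [w]; (2) K is recursively compact, i.e. the set {L : L a finite list of words over 𝒜 with K ⊆ ⋃_{w ∈ L} [w]} is Σ₁ (r.e.). -/
open Filter Topology MeasureTheory Set
open scoped ENNReal NNReal

/-- Cylinder of a finite word in Cantor space: the set of sequences beginning with `w`. -/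
def cyl {𝒜 : Type*} (w : List 𝒜) : Set (ℕ → 𝒜) :=
  {x | ∀ i : Fin w.length, x i = w.get i}

/-- The shift map on Cantor space. -/
def shiftMap {𝒜 : Type*} (x : ℕ → 𝒜) : ℕ → 𝒜 := fun i => x (i + 1)

/-- ω-limit set of `x` under iteration of `T`: the set of accumulation points of the orbit. -/
def omegaSet {X : Type*} [TopologicalSpace X] (T : X → X) (x : X) : Set X :=
  {y | MapClusterPt y Filter.atTop fun n => T^[n] x}

/-- Realm of attraction `ρ(A) = {x : ω(x) ⊆ A}`. -/
def realm {X : Type*} [TopologicalSpace X] (T : X → X) (A : Set X) : Set X :=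
  {x | omegaSet T x ⊆ A}

/-- `A` is a topological attractor of `T`: a closed invariant set whose realm of attraction is
residual, and such that no strictly smaller closed subset has nonmeager realm of attraction. -/
def IsTopAttractor {X : Type*} [TopologicalSpace X] (T : X → X) (A : Set X) : Prop :=
  IsClosed A ∧ Set.MapsTo T A A ∧ realm T A ∈ residual X ∧
    ∀ A' : Set X, IsClosed A' → A' ⊂ A → IsMeagre (realm T A')

/-- `A` is a metric attractor of `T` w.r.t. `lam`: a closed invariant set whose realm of
attraction has full measure, and no strictly smaller closed subset has realm of positive
measure. -/
def IsMetricAttractor {X : Type*} [TopologicalSpace X] [MeasurableSpace X]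
    (T : X → X) (lam : Measure X) (A : Set X) : Prop :=
  IsClosed A ∧ Set.MapsTo T A A ∧ lam (realm T A) = 1 ∧
    ∀ A' : Set X, IsClosed A' → A' ⊂ A → lam (realm T A') = 0

/-- Empirical (Birkhoff) measures `ν_n(x) = (1/n) ∑_{i<n} δ_{T^i x}`. -/
noncomputable def empMeasure {X : Type*} [MeasurableSpace X] (T : X → X) (x : X) (n : ℕ) :
    Measure X :=
  (n : ℝ≥0∞)⁻¹ • ∑ i ∈ Finset.range n, Measure.dirac (T^[i] x)

/-- Weak-* convergence of a sequence of measures: integrals of continuous functions converge. -/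
def WeakTendsto {X : Type*} [TopologicalSpace X] [MeasurableSpace X]
    (μs : ℕ → Measure X) (μ : Measure X) : Prop :=
  ∀ φ : C(X, ℝ), Filter.Tendsto (fun n => ∫ x, φ x ∂(μs n)) Filter.atTop (nhds (∫ x, φ x ∂μ))

/-- Topological support of a measure: points all of whose open neighbourhoods have positive
measure. -/
def measSupport {X : Type*} [TopologicalSpace X] [MeasurableSpace X]
    (μ : Measure X) : Set X :=
  {x | ∀ U : Set X, IsOpen U → x ∈ U → 0 < μ U}

/-- `A` is a statistical (physical) attractor of `T` w.r.t. `lam`: there is a `T`-invariant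
probability measure `μ` with support `A` such that for `lam`-a.e. `x` the empirical measures
converge weak-* to `μ`. -/
def IsStatAttractor {X : Type*} [TopologicalSpace X] [MeasurableSpace X]
    (T : X → X) (lam : Measure X) (A : Set X) : Prop :=
  IsClosed A ∧ ∃ μ : Measure X, IsProbabilityMeasure μ ∧
    Measure.map T μ = μ ∧ measSupport μ = A ∧
    ∀ᵐ x ∂lam, WeakTendsto (empMeasure T x) μ

/-- `A` is strongly attracting: there is an open `U ⊇ A` with `T (closure U) ⊆ U` and
`A = ⋂ₙ Tⁿ(U)`. -/
def StronglyAttracting {X : Type*} [TopologicalSpace X] (T : X → X) (A : Set X) : Prop :=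
  ∃ U : Set X, IsOpen U ∧ A ⊆ U ∧ T '' (closure U) ⊆ U ∧ A = ⋂ n : ℕ, T^[n] '' U

/-- `S` is Σ₁ (recursively enumerable). -/
def SigmaOne {I : Type*} [Primcodable I] (S : Set I) : Prop :=
  ∃ f : I × ℕ → Bool, Computable f ∧ ∀ i, i ∈ S ↔ ∃ a, f (i, a) = true

/-- `S` is Π₁ (co-r.e.). -/
def PiOne {I : Type*} [Primcodable I] (S : Set I) : Prop := SigmaOne Sᶜ

/-- `S` is Σ₂. -/
def SigmaTwo {I : Type*} [Primcodable I] (S : Set I) : Prop :=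
  ∃ f : I × ℕ × ℕ → Bool, Computable f ∧ ∀ i, i ∈ S ↔ ∃ a, ∀ b, f (i, a, b) = true

/-- `S` is Π₂. -/
def PiTwo {I : Type*} [Primcodable I] (S : Set I) : Prop :=
  ∃ f : I × ℕ × ℕ → Bool, Computable f ∧ ∀ i, i ∈ S ↔ ∀ a, ∃ b, f (i, a, b) = true

/-- A map of Cantor space is computable if `(T x) n` is computed by a computable function from
`n` and the finite prefix `[x 0, …, x (α n)]` of `x`, for a computable modulus `α`. -/
def CantorComputable {𝒜 : Type} [Primcodable 𝒜] (T : (ℕ → 𝒜) → (ℕ → 𝒜)) : Prop :=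
  ∃ (α : ℕ → ℕ) (β : ℕ → List 𝒜 → 𝒜), Computable α ∧ Computable₂ β ∧
    ∀ (x : ℕ → 𝒜) (n : ℕ), T x n = β n (List.ofFn fun i : Fin (α n + 1) => x i)

/-- A Borel probability measure on Cantor space is computable if the measures of finite unions
of cylinders are uniformly lower-computable: `lam(⋃_{w ∈ W} [w]) = sup_k q (W, k)` for a
computable `q`. -/
def ComputableCantorMeasure {𝒜 : Type} [Primcodable 𝒜] [MeasurableSpace 𝒜]
    (lam : Measure (ℕ → 𝒜)) : Prop :=
  ∃ q : List (List 𝒜) × ℕ → ℚ, Computable q ∧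
    ∀ W : List (List 𝒜), (lam (⋃ w ∈ W, cyl w)).toReal = ⨆ k, (q (W, k) : ℝ)

/-- Indices of machines halting on input 0. -/
def HaltSet : Set ℕ := {e | ((Denumerable.ofNat Nat.Partrec.Code e).eval 0).Dom}

/-- Indices of total machines. -/
def TotSet : Set ℕ := {e | ∀ n, ((Denumerable.ofNat Nat.Partrec.Code e).eval n).Dom}

/-- Indices of machines with finite domain. -/
def FinSet : Set ℕ := {e | {n | ((Denumerable.ofNat Nat.Partrec.Code e).eval n).Dom}.Finite}


/-! The complement of `K` is a union of cylinders enumerated by `W`. If `K ⊆ ⋃ L`, then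
the cylinders of `L` and of `W` together cover Cantor space, so by compactness (König's lemma)
the cylinders of `L` and those of `W` enumerated by some stage `s`, all of length at most `s`,
already cover it; this is a decidable property of `(L, s)`, so `{L | K ⊆ ⋃ L}` is r.e.
Conversely `[w] ⊆ Kᶜ` iff `K` is covered by the finitely many other cylinders of length `|w|`,
which is r.e. in `w`, and `Kᶜ` is the union of these cylinders because it is open. -/

section SigmaOne

variable {I J : Type*} [Primcodable I] [Primcodable J]

theorem SigmaOne.of_primrecPred {p : I × ℕ → Prop} (hp : PrimrecPred p) :
    SigmaOne {i | ∃ a, p (i, a)} := by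
  obtain ⟨_, hp⟩ := hp
  exact ⟨fun q => decide (p q), hp.to_comp, fun i => by simp⟩

theorem SigmaOne.preimage {S : Set J} (hS : SigmaOne S) {g : I → J} (hg : Computable g) :
    SigmaOne (g ⁻¹' S) := by
  obtain ⟨f, hf, hfS⟩ := hS
  exact ⟨fun q => f (g q.1, q.2), hf.comp ((hg.comp .fst).pair .snd), fun i => hfS (g i)⟩

/-- Kleene normal form: the search can be made primitive recursive by running a program for the
computable witness with a step bound `k`, the pair `(a, k)` being coded as one number. -/
theorem SigmaOne.exists_primrecPred {S : Set I} (hS : SigmaOne S) :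
    ∃ p : I × ℕ → Prop, PrimrecPred p ∧ S = {i | ∃ a, p (i, a)} := by
  open Nat.Partrec Encodable in
  obtain ⟨f, hf, hfS⟩ := hS
  obtain ⟨c, hc⟩ := Code.exists_code.1 hf
  have halts (q : I × ℕ) : f q = true ↔ ∃ k, Code.evaln k c (encode q) = some (encode true) := by
    simp_rw [← Option.mem_def, ← Code.evaln_complete, hc]
    cases hq : f q <;> simp [encodek, hq]
  refine ⟨fun q => Code.evaln q.2.unpair.2 c (encode (q.1, q.2.unpair.1)) = some (encode true),
    ?_, ?_⟩
  · have hsteps : Primrec fun q : I × ℕ => q.2.unpair.2 :=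
      Primrec.snd.comp (Primrec.unpair.comp .snd)
    have hinput : Primrec fun q : I × ℕ => encode (q.1, q.2.unpair.1) :=
      Primrec.encode.comp (Primrec.fst.pair (Primrec.fst.comp (Primrec.unpair.comp .snd)))
    exact Primrec.eq.comp (Code.primrec_evaln.comp ((hsteps.pair (.const c)).pair hinput))
      (.const _)
  · ext i
    simp only [hfS, halts, Set.mem_ofPred_eq]
    constructor
    · rintro ⟨a, k, h⟩
      exact ⟨Nat.pair a k, by simpa using h⟩
    · rintro ⟨m, h⟩
      exact ⟨_, _, h⟩

end SigmaOne

theorem PrimrecRel.exists_nat_lt {β : Type*} [Primcodable β] {R : ℕ → β → Prop}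
    (hR : PrimrecRel R) : PrimrecRel fun n b => ∃ a < n, R a b :=
  (hR.exists_mem_list.comp (Primrec.list_range.comp .fst) .snd).of_eq fun _ => by simp

namespace CantorSpace

variable {𝒜 : Type*}

theorem mem_cyl_iff {x : ℕ → 𝒜} {w : List 𝒜} : x ∈ cyl w ↔ (List.range w.length).map x = w := by
  constructor
  · intro h
    refine List.ext_getElem (by simp) fun i _ hi => ?_
    simpa using h ⟨i, hi⟩
  · intro h i
    rw [List.get_eq_getElem, List.getElem_of_eq h.symm]
    simp

theorem cyl_map_range (x : ℕ → 𝒜) (n : ℕ) : cyl ((List.range n).map x) = PiNat.cylinder x n := by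
  ext y
  simp [mem_cyl_iff, List.map_inj_left, PiNat.mem_cylinder_iff]

theorem mem_iUnion_cyl_iff {P : List 𝒜 → Prop} {x : ℕ → 𝒜} :
    x ∈ ⋃ (w) (_ : P w), cyl w ↔ ∃ n, P ((List.range n).map x) := by
  simp only [mem_iUnion, mem_cyl_iff, exists_prop]
  constructor
  · rintro ⟨w, hw, hx⟩
    exact ⟨w.length, by rwa [hx]⟩
  · rintro ⟨n, hn⟩
    exact ⟨_, hn, by simp⟩

section Topology

variable [TopologicalSpace 𝒜] [DiscreteTopology 𝒜]

theorem isOpen_setOf_map_range (P : List 𝒜 → Prop) (n : ℕ) :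
    IsOpen {x : ℕ → 𝒜 | P ((List.range n).map x)} := by
  refine isOpen_iff_forall_mem_open.2 fun x hx => ⟨PiNat.cylinder x n, fun y hy => ?_,
    PiNat.isOpen_cylinder _ x n, PiNat.self_mem_cylinder x n⟩
  rw [← cyl_map_range, mem_cyl_iff, List.length_map, List.length_range] at hy
  show P _
  rwa [hy]

theorem _root_.IsOpen.exists_cyl_subset {U : Set (ℕ → 𝒜)} (hU : IsOpen U) {x : ℕ → 𝒜}
    (hx : x ∈ U) : ∃ n, cyl ((List.range n).map x) ⊆ U := by
  obtain ⟨_, ⟨y, n, rfl⟩, hxy, hyU⟩ :=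
    (PiNat.isTopologicalBasis_cylinders _).exists_subset_of_mem_open hx hU
  exact ⟨n, by rwa [cyl_map_range, PiNat.mem_cylinder_iff_eq.1 hxy]⟩

theorem _root_.IsOpen.eq_iUnion_cyl {U : Set (ℕ → 𝒜)} (hU : IsOpen U) :
    U = ⋃ w ∈ {w | cyl w ⊆ U}, cyl w := by
  refine Subset.antisymm (fun x hx => ?_) (iUnion₂_subset fun w hw => hw)
  obtain ⟨n, hn⟩ := hU.exists_cyl_subset hx
  exact mem_iUnion₂.2 ⟨_, hn, mem_cyl_iff.2 (by simp)⟩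

end Topology

theorem exists_forall_map_range_mem [Finite 𝒜] {U : ℕ → Set (List 𝒜)} (hU : Monotone U)
    (hcover : ∀ x : ℕ → 𝒜, ∃ n s, (List.range n).map x ∈ U s) :
    ∃ s, ∀ x : ℕ → 𝒜, ∃ n ≤ s, (List.range n).map x ∈ U s := by
  let _ : TopologicalSpace 𝒜 := ⊥
  have _ : DiscreteTopology 𝒜 := ⟨rfl⟩
  have hopen (s : ℕ) : IsOpen {x : ℕ → 𝒜 | ∃ n ≤ s, (List.range n).map x ∈ U s} := by
    simp only [Set.ofPred_exists]
    exact isOpen_iUnion fun n => isOpen_setOf_map_range (fun w => n ≤ s ∧ w ∈ U s) n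
  have hmono : Monotone fun s => {x : ℕ → 𝒜 | ∃ n ≤ s, (List.range n).map x ∈ U s} :=
    fun s t hst x ⟨n, hn, hx⟩ => ⟨n, hn.trans hst, hU hst hx⟩
  have hunion : Set.univ ⊆ ⋃ s, {x : ℕ → 𝒜 | ∃ n ≤ s, (List.range n).map x ∈ U s} := by
    intro x _
    obtain ⟨n, s, hx⟩ := hcover x
    exact mem_iUnion.2 ⟨max n s, n, le_max_left n s, hU (le_max_right n s) hx⟩
  obtain ⟨s, hs⟩ := isCompact_univ.elim_directed_cover _ hopen hunion hmono.directed_le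
  exact ⟨s, fun x => hs (mem_univ x)⟩

section Words

variable [Fintype 𝒜]

variable (𝒜) in
noncomputable def words (n : ℕ) : List (List 𝒜) :=
  (fun L => L.flatMap fun v => Finset.univ.toList.map (· :: v))^[n] [[]]

theorem mem_words {v : List 𝒜} {n : ℕ} : v ∈ words 𝒜 n ↔ v.length = n := by
  induction n generalizing v with
  | zero => simp [words]
  | succ n ih =>
    rw [words, Function.iterate_succ_apply', ← words]
    cases v <;> simp [ih]

/-- Stated for `n + 1` so that it also holds for the empty alphabet, where `words 𝒜 0 = [[]]`
but there is no `x`. -/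
theorem forall_mem_words_succ_iff {P : List 𝒜 → Prop} {n : ℕ} :
    (∀ v ∈ words 𝒜 (n + 1), P v) ↔ ∀ x : ℕ → 𝒜, P ((List.range (n + 1)).map x) := by
  refine ⟨fun h x => h _ (mem_words.2 (by simp)), fun h v hv => ?_⟩
  obtain ⟨a, t, rfl⟩ := List.exists_cons_of_length_eq_add_one (mem_words.1 hv)
  have hext : (List.range (n + 1)).map (fun i => (a :: t).getD i a) = a :: t := by
    refine List.ext_getElem (by simp [mem_words.1 hv]) fun i _ hi => ?_
    simp [List.getElem?_eq_getElem hi]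
  rw [← hext]
  exact h _

theorem compl_cyl [DecidableEq 𝒜] (w : List 𝒜) :
    (cyl w)ᶜ = ⋃ v ∈ (words 𝒜 w.length).filter (· ≠ w), cyl v := by
  ext x
  rw [mem_compl_iff, mem_iUnion_cyl_iff, mem_cyl_iff]
  simp [mem_words]

theorem primrec_words [Primcodable 𝒜] : Primrec (words 𝒜) := by
  have hcons : Primrec₂ fun (q : (ℕ × List (List 𝒜)) × List 𝒜) (a : 𝒜) => a :: q.2 :=
    (Primrec.list_cons.comp .snd (Primrec.snd.comp .fst)).to₂
  exact Primrec.nat_iterate .id (.const [[]])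
    (Primrec.list_flatMap .snd (Primrec.list_map (.const _) hcons).to₂).to₂

end Words

theorem take_map_range (x : ℕ → 𝒜) {m n : ℕ} (h : n ≤ m) :
    ((List.range m).map x).take n = (List.range n).map x := by
  rw [← List.map_take, List.take_range, min_eq_left h]

theorem subset_iUnion_cyl_iff_exists_stage [Fintype 𝒜] {K : Set (ℕ → 𝒜)}
    {p : List 𝒜 × ℕ → Prop} (hK : Kᶜ = ⋃ w ∈ {w | ∃ a, p (w, a)}, cyl w)
    (L : List (List 𝒜)) :
    K ⊆ ⋃ w ∈ L, cyl w ↔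
      ∃ s, ∀ v ∈ words 𝒜 (s + 1), ∃ n ≤ s, v.take n ∈ L ∨ ∃ a < s, p (v.take n, a) := by
  have hKc (x : ℕ → 𝒜) : x ∉ K ↔ ∃ n a, p ((List.range n).map x, a) := by
    rw [← mem_compl_iff, hK, mem_iUnion_cyl_iff]
    rfl
  have hstage (s : ℕ) : (∀ v ∈ words 𝒜 (s + 1), ∃ n ≤ s, v.take n ∈ L ∨ ∃ a < s, p (v.take n, a)) ↔
      ∀ x : ℕ → 𝒜, ∃ n ≤ s, (List.range n).map x ∈ L ∨ ∃ a < s, p ((List.range n).map x, a) := by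
    refine forall_mem_words_succ_iff.trans <| forall_congr' fun x =>
      exists_congr fun n => and_congr_right fun hn => ?_
    rw [take_map_range x (by omega)]
  simp only [hstage, subset_def, mem_iUnion_cyl_iff]
  constructor
  · intro hL
    refine exists_forall_map_range_mem (U := fun s => {w | w ∈ L ∨ ∃ a < s, p (w, a)})
      (fun s t hst w hw => hw.imp_right fun ⟨a, ha, hpa⟩ => ⟨a, ha.trans_le hst, hpa⟩)
      fun x => ?_
    by_cases hx : x ∈ K
    · obtain ⟨n, hn⟩ := hL x hx
      exact ⟨n, 0, Or.inl hn⟩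
    · obtain ⟨n, a, hpa⟩ := (hKc x).1 hx
      exact ⟨n, a + 1, Or.inr ⟨a, lt_add_one a, hpa⟩⟩
  · rintro ⟨s, hs⟩ x hx
    obtain ⟨n, -, hn | ⟨a, -, hpa⟩⟩ := hs x
    · exact ⟨n, hn⟩
    · exact absurd hx ((hKc x).2 ⟨n, a, hpa⟩)

theorem primrecPred_stage [Fintype 𝒜] [Primcodable 𝒜] [DecidableEq 𝒜] {p : List 𝒜 × ℕ → Prop}
    (hp : PrimrecPred p) :
    PrimrecPred fun q : List (List 𝒜) × ℕ =>
      ∀ v ∈ words 𝒜 (q.2 + 1), ∃ n ≤ q.2, v.take n ∈ q.1 ∨ ∃ a < q.2, p (v.take n, a) := by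
  have hmem : PrimrecRel fun (u : List 𝒜) (L : List (List 𝒜)) => u ∈ L :=
    ((PrimrecRel.exists_mem_list Primrec.eq).of_eq fun L u => by simp).swap
  have hwitness : PrimrecRel fun (a : ℕ) (z : ℕ × List 𝒜 × List (List 𝒜) × ℕ) =>
      p (z.2.1.take z.1, a) :=
    hp.comp ((Primrec.list_take.comp (Primrec.fst.comp .snd)
      (Primrec.fst.comp (Primrec.snd.comp .snd))).pair .fst)
  have hlisted : PrimrecRel fun (n : ℕ) (y : List 𝒜 × List (List 𝒜) × ℕ) => y.1.take n ∈ y.2.1 :=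
    hmem.comp (Primrec.list_take.comp .fst (Primrec.fst.comp .snd))
      (Primrec.fst.comp (Primrec.snd.comp .snd))
  have henumerated : PrimrecRel fun (n : ℕ) (y : List 𝒜 × List (List 𝒜) × ℕ) =>
      ∃ a < y.2.2, p (y.1.take n, a) :=
    hwitness.exists_nat_lt.comp (Primrec.snd.comp (Primrec.snd.comp .snd)) .id
  have hcovered : PrimrecRel fun (n : ℕ) (y : List 𝒜 × List (List 𝒜) × ℕ) =>
      y.1.take n ∈ y.2.1 ∨ ∃ a < y.2.2, p (y.1.take n, a) :=
    hlisted.or henumerated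
  have hv : PrimrecRel fun (v : List 𝒜) (q : List (List 𝒜) × ℕ) =>
      ∃ n < q.2 + 1, v.take n ∈ q.1 ∨ ∃ a < q.2, p (v.take n, a) :=
    hcovered.exists_nat_lt.comp (Primrec.succ.comp (Primrec.snd.comp .snd)) .id
  exact (hv.forall_mem_list.comp (primrec_words.comp (Primrec.succ.comp .snd)) .id).of_eq
    fun q => by simp only [Nat.lt_succ_iff, id_eq, Nat.succ_eq_add_one]

end CantorSpace

open CantorSpace

/-- For a closed subset of Cantor space over a finite alphabet, upper computability
(the complement is an r.e. union of cylinders) is equivalent to recursive compactness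
(inclusion in a finite union of cylinders is semi-decidable). -/
theorem stmt0 {𝒜 : Type} [Fintype 𝒜] [Primcodable 𝒜]
    [TopologicalSpace 𝒜] [DiscreteTopology 𝒜]
    (K : Set (ℕ → 𝒜)) (hK : IsClosed K) :
    (∃ W : Set (List 𝒜), SigmaOne W ∧ Kᶜ = ⋃ w ∈ W, cyl w) ↔
      SigmaOne {L : List (List 𝒜) | K ⊆ ⋃ w ∈ L, cyl w} := by
  classical
  constructor
  · rintro ⟨W, hW, hWK⟩
    obtain ⟨p, hp, rfl⟩ := hW.exists_primrecPred
    convert SigmaOne.of_primrecPred (primrecPred_stage hp) using 1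
    ext L
    exact subset_iUnion_cyl_iff_exists_stage hWK L
  · intro hcover
    have hcompl : Primrec fun w : List 𝒜 => (words 𝒜 w.length).filter (· ≠ w) :=
      (PrimrecRel.listFilter Primrec.eq.not).comp (primrec_words.comp .list_length) .id
    refine ⟨{w | cyl w ⊆ Kᶜ}, ?_, hK.isOpen_compl.eq_iUnion_cyl⟩
    convert hcover.preimage hcompl.to_comp using 1
    ext w
    rw [mem_preimage, mem_ofPred, mem_ofPred, subset_compl_comm, compl_cyl]
end

section
/- Let X be a nonempty compact metric space, T : X → X continuous, and A ⊆ X a topological attractor of T. Then for every closed set K ⊆ X one has: K ∩ A ≠ ∅ if and only if the set {x ∈ X : ω(x) ∩ K ≠ ∅} is dense in X. -/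
open Filter Topology MeasureTheory Set
open scoped ENNReal NNReal

/-!
If `K` meets `A` at `z`, then every `x ∈ ρ(A)` with `ω(x) ∩ K = ∅` lies in `ρ(A \ U)` for
some thickening `U` of `K`; these sets `A \ U` are closed proper subsets of `A` (they miss `z`),
so by minimality of `A` their realms are meagre and `{x : ω(x) ∩ K ≠ ∅}` is residual.
Conversely, `{x : ω(x) ∩ K ≠ ∅}` is always a `G_δ` (the orbit visits every thickening of `K`
infinitely often), so if it is dense it is residual and meets the residual set `ρ(A)`.
-/

open Metric

theorem isClosed_omegaSet {X : Type*} [TopologicalSpace X] (T : X → X) (x : X) :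
    IsClosed (omegaSet T x) :=
  isClosed_setOfPred_clusterPt

theorem isGδ_setOf_frequently_atTop_mem {X Y : Type*} [TopologicalSpace X] [TopologicalSpace Y]
    {f : ℕ → X → Y} (hf : ∀ n, Continuous (f n)) {U : Set Y} (hU : IsOpen U) :
    IsGδ {x | ∃ᶠ n in atTop, f n x ∈ U} := by
  have hset : {x | ∃ᶠ n in atTop, f n x ∈ U} = ⋂ N : ℕ, ⋃ n ≥ N, f n ⁻¹' U := by
    ext x
    simp only [mem_ofPred_eq, frequently_atTop, mem_iInter, mem_iUnion, mem_preimage, exists_prop]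
  rw [hset]
  exact .iInter fun N => (isOpen_biUnion fun n _ => hU.preimage (hf n)).isGδ

theorem exists_mem_mapClusterPt_iff_frequently_thickening {X ι : Type*} [PseudoMetricSpace X]
    {K : Set X} (hK : IsCompact K) {l : Filter ι} {u : ι → X} :
    (∃ y ∈ K, MapClusterPt y l u) ↔
      ∀ m : ℕ, ∃ᶠ i in l, u i ∈ thickening (1 / ((m : ℝ) + 1)) K := by
  constructor
  · rintro ⟨y, hyK, hy⟩ m
    have hm : (0 : ℝ) < 1 / ((m : ℝ) + 1) := by positivity
    exact mapClusterPt_iff_frequently.mp hy _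
      (mem_of_superset (ball_mem_nhds y hm) (ball_subset_thickening hyK _))
  · intro hfreq
    by_contra! hnot
    have hdisj : Disjoint (𝓝ˢ K) (map u l) :=
      hK.disjoint_nhdsSet_left.2 fun y hy => disjoint_iff.2 (not_neBot.1 (hnot y hy))
    obtain ⟨δ, hδ, hevent⟩ := (hasBasis_nhdsSet_thickening hK).disjoint_iff_left.1 hdisj
    obtain ⟨m, hm⟩ := exists_nat_one_div_lt hδ
    obtain ⟨i, hin, hout⟩ := ((hfreq m).and_eventually hevent).exists
    exact hout (thickening_mono hm.le K hin)

theorem isGδ_setOf_omegaSet_inter_nonempty {X : Type*} [PseudoMetricSpace X] {T : X → X}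
    (hT : Continuous T) {K : Set X} (hK : IsCompact K) :
    IsGδ {x | (omegaSet T x ∩ K).Nonempty} := by
  have hset : {x | (omegaSet T x ∩ K).Nonempty} =
      ⋂ m : ℕ, {x | ∃ᶠ n in atTop, T^[n] x ∈ thickening (1 / ((m : ℝ) + 1)) K} := by
    ext x
    simp only [mem_ofPred_eq, mem_iInter, ← exists_mem_mapClusterPt_iff_frequently_thickening hK,
      Set.Nonempty, mem_inter_iff, omegaSet, and_comm]
  rw [hset]
  exact .iInter fun m => isGδ_setOf_frequently_atTop_mem hT.iterate isOpen_thickening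

theorem IsTopAttractor.mem_residual_setOf_omegaSet_inter_nonempty {X : Type*}
    [PseudoMetricSpace X] [CompactSpace X] {T : X → X} {A : Set X} (hA : IsTopAttractor T A)
    {K : Set X} (hK : IsClosed K) (hKA : (K ∩ A).Nonempty) :
    {x | (omegaSet T x ∩ K).Nonempty} ∈ residual X := by
  obtain ⟨hAc, -, hres, hmin⟩ := hA
  obtain ⟨z, hzK, hzA⟩ := hKA
  have hmeagre : ∀ m : ℕ, IsMeagre (realm T (A \ thickening (1 / ((m : ℝ) + 1)) K)) :=
    fun m => hmin _ (hAc.sdiff isOpen_thickening)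
      ⟨sdiff_subset, fun h => (h hzA).2 (self_subset_thickening (by positivity) K hzK)⟩
  filter_upwards [hres, isMeagre_iUnion hmeagre] with x hxA hxB
  by_contra hx
  have hωK : Disjoint (omegaSet T x) K :=
    disjoint_iff_inter_eq_empty.2 (not_nonempty_iff_eq_empty.1 hx)
  obtain ⟨δ, hδ, hdisj⟩ := hωK.exists_thickenings (isClosed_omegaSet T x).isCompact hK
  obtain ⟨m, hm⟩ := exists_nat_one_div_lt hδ
  refine hxB (mem_iUnion.2 ⟨m, fun y hy => ⟨hxA hy, fun hyK => ?_⟩⟩)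
  exact hdisj.ne_of_mem (self_subset_thickening hδ _ hy) (thickening_mono hm.le K hyK) rfl

/-- If `A` is a topological attractor of a continuous map of a nonempty compact metric space,
then a closed set `K` meets `A` iff `{x : ω(x) ∩ K ≠ ∅}` is dense. -/
theorem stmt1 {X : Type*} [MetricSpace X] [CompactSpace X] [Nonempty X]
    {T : X → X} (hT : Continuous T) {A : Set X} (hA : IsTopAttractor T A)
    {K : Set X} (hK : IsClosed K) :
    (K ∩ A).Nonempty ↔ Dense {x : X | (omegaSet T x ∩ K).Nonempty} := by
  refine ⟨fun hKA => ?_, fun hdense => ?_⟩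
  · exact dense_of_mem_residual (hA.mem_residual_setOf_omegaSet_inter_nonempty hK hKA)
  · have hres :=
      residual_of_dense_Gδ (isGδ_setOf_omegaSet_inter_nonempty hT hK.isCompact) hdense
    obtain ⟨x, ⟨y, hyω, hyK⟩, hxA⟩ :=
      (dense_of_mem_residual (inter_mem hres hA.2.2.1)).nonempty
    exact ⟨y, hyK, hxA hyω⟩
end

section
/- Let X be the Cantor space over a finite alphabet 𝒜, T : X → X a computable map, and A ⊆ X a closed T-invariant set which is strongly attracting. Then A is a Π₁ closed set, i.e. its outer collection {w : [w] ∩ A = ∅} is a Σ₁ (r.e.) set of words. -/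
open Filter Topology MeasureTheory Set
open scoped ENNReal NNReal

/-!
Enlarging the trapping region `U` to a clopen set `C` with `T '' U ⊆ C ⊆ U` does not change the
attractor, so `A = ⋂ n, T^[n] '' C`, and `C` is a union of cylinders of some fixed length `L`.
By compactness `[w]` misses `A` iff it misses some `T^[N] '' C`, and that is decided by a finite
computation: simulate `N` steps of `T` on every word of a sufficient length `m` whose length-`L`
prefix starts a point of `C`, and check that no output begins with `w`. Searching over `(N, m)`
enumerates the words whose cylinder misses `A`.
-/

section Computability

variable {α β σ : Type*} [Primcodable α] [Primcodable β] [Primcodable σ]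

namespace Computable

theorem nat_iterate {f : α → ℕ} {g : α → β} {h : α → β → β} (hf : Computable f)
    (hg : Computable g) (hh : Computable₂ h) : Computable fun a => (h a)^[f a] (g a) :=
  (nat_rec hf hg (hh.comp fst (snd.comp snd)).to₂).of_eq fun a => by
    induction f a <;> simp [*, -Function.iterate_succ, Function.iterate_succ']

theorem list_map {f : α → List β} {g : α → β → σ} (hf : Computable f) (hg : Computable₂ g) :
    Computable fun a => (f a).map (g a) := by
  have step : Computable₂ fun (a : α) (p : ℕ × List σ) => p.2 ++ ((f a)[p.1]?.map (g a)).toList :=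
    list_append.comp (snd.comp snd) <| Primrec.optionToList.to_comp.comp <|
      option_map (list_getElem?.comp (hf.comp fst) (fst.comp snd)) (hg.comp (fst.comp fst) snd)
  refine (nat_rec (list_length.comp hf) (const []) step).of_eq fun a => ?_
  suffices ∀ k, Nat.rec [] (fun i acc => acc ++ ((f a)[i]?.map (g a)).toList) k
      = ((f a).take k).map (g a) by simpa using this (f a).length
  intro k
  induction k with
  | zero => rfl
  | succ k ih => rw [List.take_add_one, List.map_append, ← ih, ← Option.toList_map]

end Computable

namespace ComputablePred

theorem comp {p : β → Prop} {f : α → β} : ComputablePred p → Computable f →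
    ComputablePred fun a => p (f a)
  | ⟨_, hp⟩, hf => (hp.comp hf).computablePred

protected theorem and {p q : α → Prop} : ComputablePred p → ComputablePred q →
    ComputablePred fun a => p a ∧ q a
  | ⟨_, hp⟩, ⟨_, hq⟩ =>
    Computable.computablePred <| (Primrec.and.to_comp.comp hp hq).of_eq fun a => by simp

theorem forall_mem_list {l : α → List β} {p : α → β → Prop} (hl : Computable l)
    (hp : ComputablePred fun q : α × β => p q.1 q.2) :
    ComputablePred fun a => ∀ b ∈ l a, p a b := by
  classical
  have hall : Computable fun a => decide (∀ c ∈ (l a).map fun b => decide (p a b), c = true) :=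
    (PrimrecPred.forall_mem_list (Primrec.eq.comp .id (.const true))).computablePred.decide.comp
      (Computable.list_map hl hp.decide.to₂)
  exact hall.computablePred.of_eq fun a => by simp

end ComputablePred

theorem sigmaOne_of_computablePred {S : Set α} {R : α → ℕ → ℕ → Prop}
    (hR : ComputablePred fun p : α × ℕ × ℕ => R p.1 p.2.1 p.2.2)
    (hS : ∀ a, a ∈ S ↔ ∃ n k, R a n k) : SigmaOne S := by
  classical
  refine ⟨fun p => decide (R p.1 p.2.unpair.1 p.2.unpair.2),
    hR.decide.comp (Computable.fst.pair (Computable.unpair.comp Computable.snd)), fun a => ?_⟩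
  simp only [hS, decide_eq_true_eq]
  exact ⟨fun ⟨n, k, h⟩ => ⟨Nat.pair n k, by simpa using h⟩, fun ⟨c, h⟩ => ⟨_, _, h⟩⟩

end Computability

section PrefixWord

variable {𝒜 : Type*}

def prefixWord (x : ℕ → 𝒜) (n : ℕ) : List 𝒜 := List.ofFn fun i : Fin n => x i

@[simp]
theorem length_prefixWord (x : ℕ → 𝒜) (n : ℕ) : (prefixWord x n).length = n := by
  simp [prefixWord]

@[simp]
theorem getElem_prefixWord (x : ℕ → 𝒜) (n i : ℕ) (h : i < (prefixWord x n).length) :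
    (prefixWord x n)[i] = x i := by
  simp [prefixWord]

theorem take_prefixWord (x : ℕ → 𝒜) {k n : ℕ} (h : k ≤ n) :
    (prefixWord x n).take k = prefixWord x k :=
  List.ext_getElem (by simp [h]) fun i _ _ => by simp

theorem prefixWord_eq_prefixWord_iff {x y : ℕ → 𝒜} {n : ℕ} :
    prefixWord x n = prefixWord y n ↔ ∀ i < n, x i = y i := by
  simp [prefixWord, List.ofFn_inj, funext_iff, Fin.forall_iff]

theorem mem_cyl_iff_prefixWord {x : ℕ → 𝒜} {w : List 𝒜} :
    x ∈ cyl w ↔ prefixWord x w.length = w := by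
  simp [cyl, List.ext_get_iff, prefixWord, Fin.forall_iff]

theorem prefixWord_getD (u : List 𝒜) (x : ℕ → 𝒜) {k : ℕ} (hk : k ≤ u.length) :
    prefixWord (fun i => u.getD i (x i)) k = u.take k :=
  List.ext_getElem (by simp [hk]) fun i hi _ => by
    have : i < u.length := by simp at hi; omega
    simp [this]

theorem isClosed_cyl [TopologicalSpace 𝒜] [DiscreteTopology 𝒜] (w : List 𝒜) :
    IsClosed (cyl w) := by
  have : cyl w = ⋂ i : Fin w.length, {x : ℕ → 𝒜 | x i = w.get i} := by ext; simp [cyl]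
  rw [this]
  exact isClosed_iInter fun i => isClosed_eq (continuous_apply _) continuous_const

end PrefixWord

section PrefixSimulation

variable {𝒜 : Type*} (α : ℕ → ℕ) (β : ℕ → List 𝒜 → 𝒜)

/-- The number of leading indices `i < m` with `α i < m`: this many symbols of `T x` are computed
from the first `m` symbols of `x` when `T x i = β i (prefixWord x (α i + 1))`. -/
def determinedLength (m : ℕ) : ℕ := ((List.range m).map α).findIdx (m ≤ ·)

def imagePrefix (u : List 𝒜) : List 𝒜 :=
  (List.range (determinedLength α u.length)).map fun i => β i (u.take (α i + 1))

variable {α β}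

theorem lt_of_lt_determinedLength {m i : ℕ} (h : i < determinedLength α m) : α i < m := by
  have hi : i < m := by
    simpa using h.trans_le (List.findIdx_le_length (xs := (List.range m).map α))
  simpa [hi] using List.not_of_lt_findIdx h

theorem tendsto_determinedLength : Tendsto (determinedLength α) atTop atTop := by
  refine tendsto_atTop_atTop.2 fun k => ⟨k + 1 + (Finset.range (k + 1)).sup α, fun m hm => ?_⟩
  refine (List.lt_findIdx_of_not (by simpa using by omega) fun j hj => ?_).le
  have : α j ≤ (Finset.range (k + 1)).sup α := Finset.le_sup (Finset.mem_range.2 (by omega))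
  simpa using by omega

theorem imagePrefix_prefixWord {T : (ℕ → 𝒜) → ℕ → 𝒜}
    (hT : ∀ x n, T x n = β n (prefixWord x (α n + 1))) (x : ℕ → 𝒜) (m : ℕ) :
    imagePrefix α β (prefixWord x m) = prefixWord (T x) (determinedLength α m) :=
  List.ext_getElem (by simp [imagePrefix]) fun i hi _ => by
    have hi : i < determinedLength α m := by simpa [imagePrefix] using hi
    simp [imagePrefix, hT, take_prefixWord x (lt_of_lt_determinedLength hi)]

theorem iterate_imagePrefix_prefixWord {T : (ℕ → 𝒜) → ℕ → 𝒜}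
    (hT : ∀ x n, T x n = β n (prefixWord x (α n + 1))) (N : ℕ) (x : ℕ → 𝒜) (m : ℕ) :
    (imagePrefix α β)^[N] (prefixWord x m) =
      prefixWord (T^[N] x) ((determinedLength α)^[N] m) := by
  induction N generalizing x m with
  | zero => rfl
  | succ N ih => simp [imagePrefix_prefixWord hT, ih]

end PrefixSimulation

section PrefixSimulationComputability

variable {𝒜 : Type*} [Primcodable 𝒜] {α : ℕ → ℕ} {β : ℕ → List 𝒜 → 𝒜}

open Computable

theorem computable_determinedLength (hα : Computable α) : Computable (determinedLength α) :=
  have hfind : Primrec₂ fun (m : ℕ) (l : List ℕ) => l.findIdx (m ≤ ·) :=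
    Primrec.list_findIdx .snd (Primrec.nat_le.decide.comp (Primrec.fst.comp .fst) .snd).to₂
  hfind.to_comp.comp Computable.id (list_map Primrec.list_range.to_comp (hα.comp snd).to₂)

theorem computable_iterate_imagePrefix (hα : Computable α) (hβ : Computable₂ β) :
    Computable₂ fun (N : ℕ) (u : List 𝒜) => (imagePrefix α β)^[N] u := by
  have hstep : Computable (imagePrefix α β) :=
    list_map (Primrec.list_range.to_comp.comp ((computable_determinedLength hα).comp list_length))
      (hβ.comp snd (Primrec.list_take.to_comp.comp (succ.comp (hα.comp snd)) fst))
  exact nat_iterate fst snd (hstep.comp snd).to₂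

end PrefixSimulationComputability

section Words

variable (𝒜 : Type*) [Fintype 𝒜]

noncomputable def words (m : ℕ) : List (List 𝒜) :=
  (fun l => l.flatMap fun u => Finset.univ.toList.map (· :: u))^[m] [[]]

theorem mem_words {m : ℕ} {u : List 𝒜} : u ∈ words 𝒜 m ↔ u.length = m := by
  induction m generalizing u with
  | zero => simp [words]
  | succ m ih =>
    rw [words, Function.iterate_succ_apply', ← words]
    cases u <;> simp [ih]

theorem primrec_words [Primcodable 𝒜] : Primrec (words 𝒜) :=
  Primrec.nat_iterate .id (.const _) <| .to₂ <| Primrec.list_flatMap .snd <| .to₂ <|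
    Primrec.list_map (.const _) (Primrec.list_cons.comp .snd (Primrec.snd.comp .fst)).to₂

end Words

section Topology

theorem continuous_of_apply_eq_prefixWord {𝒜 : Type*} [TopologicalSpace 𝒜] [DiscreteTopology 𝒜]
    {α : ℕ → ℕ} {β : ℕ → List 𝒜 → 𝒜} {T : (ℕ → 𝒜) → ℕ → 𝒜}
    (hT : ∀ x n, T x n = β n (prefixWord x (α n + 1))) : Continuous T := by
  refine continuous_pi fun n => ?_
  simp only [hT, prefixWord]
  exact (continuous_of_discreteTopology (f := fun g : Fin (α n + 1) → 𝒜 => β n (List.ofFn g))).comp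
    (continuous_pi fun i => continuous_apply _)

theorem iInter_iterate_image_eq_of_subset {X : Type*} {T : X → X} {C U : Set X} (hCU : C ⊆ U)
    (hUC : T '' U ⊆ C) : ⋂ n, T^[n] '' C = ⋂ n, T^[n] '' U := by
  refine (iInter_mono fun n => image_mono hCU).antisymm (subset_iInter fun n => ?_)
  calc ⋂ k, T^[k] '' U ⊆ T^[n + 1] '' U := iInter_subset _ (n + 1)
    _ = T^[n] '' (T '' U) := by rw [Function.iterate_succ, image_comp]
    _ ⊆ T^[n] '' C := image_mono hUC

theorem StronglyAttracting.exists_isClopen {X : Type*} [TopologicalSpace X] [CompactSpace X]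
    [T2Space X] [TotallyDisconnectedSpace X] {T : X → X} (hT : Continuous T) {A : Set X}
    (hA : StronglyAttracting T A) : ∃ C, IsClopen C ∧ MapsTo T C C ∧ A = ⋂ n, T^[n] '' C := by
  obtain ⟨U, hU, -, hTU, rfl⟩ := hA
  obtain ⟨C, hC, hKC, hCU⟩ := exists_clopen_of_closed_subset_open
    (isClosed_closure.isCompact.image hT).isClosed hU hTU
  have hUC : T '' U ⊆ C := (image_mono subset_closure).trans hKC
  exact ⟨C, hC, fun x hx => hUC (mem_image_of_mem T (hCU hx)),
    (iInter_iterate_image_eq_of_subset hCU hUC).symm⟩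

theorem IsCompact.inter_iInter_iterate_image_eq_empty_iff {X : Type*} [TopologicalSpace X]
    [T2Space X] {K : Set X} (hK : IsCompact K) {T : X → X} (hT : Continuous T) {C : Set X}
    (hC : IsCompact C) (hTC : MapsTo T C C) :
    K ∩ ⋂ n, T^[n] '' C = ∅ ↔ ∃ N, K ∩ T^[N] '' C = ∅ := by
  have hanti : Antitone fun n => T^[n] '' C := antitone_nat_of_succ_le fun n => by
    rw [Function.iterate_succ, image_comp]
    exact image_mono hTC.image_subset
  refine ⟨fun h => hK.elim_directed_family_closed _
    (fun n => (hC.image (hT.iterate n)).isClosed) h hanti.directed_ge, ?_⟩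
  rintro ⟨N, hN⟩
  exact subset_empty_iff.1 <| hN ▸ inter_subset_inter_right K (iInter_subset _ N)

theorem IsClopen.exists_prefixWord_determined {𝒜 : Type*} [TopologicalSpace 𝒜]
    [DiscreteTopology 𝒜] [Finite 𝒜] {C : Set (ℕ → 𝒜)} (hC : IsClopen C) :
    ∃ L, ∀ x y, prefixWord x L = prefixWord y L → x ∈ C → y ∈ C := by
  have hloc : ∀ x, ∃ n, ∀ y ∈ PiNat.cylinder x n, (y ∈ C ↔ x ∈ C) := fun x => by
    obtain ⟨V, hVo, hxV, hVC⟩ : ∃ V, IsOpen V ∧ x ∈ V ∧ ∀ y ∈ V, (y ∈ C ↔ x ∈ C) := by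
      by_cases hx : x ∈ C
      · exact ⟨C, hC.isOpen, hx, fun y hy => iff_of_true hy hx⟩
      · exact ⟨Cᶜ, hC.isClosed.isOpen_compl, hx, fun y hy => iff_of_false hy hx⟩
    obtain ⟨-, ⟨z, n, rfl⟩, hxz, hzV⟩ :=
      (PiNat.isTopologicalBasis_cylinders fun _ => 𝒜).exists_subset_of_mem_open hxV hVo
    exact ⟨n, fun y hy => hVC y (hzV (PiNat.mem_cylinder_iff_eq.1 hxz ▸ hy))⟩
  choose n hn using hloc
  obtain ⟨t, ht⟩ := CompactSpace.elim_nhds_subcover (fun x => PiNat.cylinder x (n x))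
    fun x => (PiNat.isOpen_cylinder _ x (n x)).mem_nhds (PiNat.self_mem_cylinder x (n x))
  refine ⟨t.sup n, fun x y hxy hx => ?_⟩
  obtain ⟨z, hz, hxz⟩ := mem_iUnion₂.1 (ht.ge (mem_univ x))
  have hyz : y ∈ PiNat.cylinder z (n z) := fun i hi => by
    rw [← hxz i hi, (prefixWord_eq_prefixWord_iff.1 hxy i (hi.trans_le (t.le_sup hz))).symm]
  exact (hn z y hyz).2 ((hn z x hxz).1 hx)

end Topology

section Certificate

variable {𝒜 : Type*} [Fintype 𝒜] {α : ℕ → ℕ} {β : ℕ → List 𝒜 → 𝒜}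

open Classical in
noncomputable def prefixesOf (C : Set (ℕ → 𝒜)) (L : ℕ) : List (List 𝒜) :=
  (words 𝒜 L).filter fun u => ∃ x ∈ C, prefixWord x L = u

theorem mem_prefixesOf {C : Set (ℕ → 𝒜)} {L : ℕ} {u : List 𝒜} :
    u ∈ prefixesOf C L ↔ ∃ x ∈ C, prefixWord x L = u := by
  simp only [prefixesOf, List.mem_filter, mem_words, decide_eq_true_eq, and_iff_right_iff_imp]
  rintro ⟨x, -, rfl⟩
  exact length_prefixWord x L

variable (α β) in
/-- A finite certificate that `cyl w` misses `T^[N] '' C`, checked by simulating `N` steps of `T`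
on the length-`m` prefixes of points of `C` (for `C` determined by prefixes of length `L`). -/
def Excludes (C : Set (ℕ → 𝒜)) (L : ℕ) (w : List 𝒜) (N m : ℕ) : Prop :=
  L ≤ m ∧ ∀ u ∈ words 𝒜 m, u.take L ∈ prefixesOf C L →
    w.length ≤ ((imagePrefix α β)^[N] u).length ∧ ((imagePrefix α β)^[N] u).take w.length ≠ w

variable {T : (ℕ → 𝒜) → ℕ → 𝒜} {C : Set (ℕ → 𝒜)} {L : ℕ} {w : List 𝒜} {N m : ℕ}

theorem Excludes.inter_iterate_image_eq_empty
    (hT : ∀ x n, T x n = β n (prefixWord x (α n + 1))) (h : Excludes α β C L w N m) :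
    cyl w ∩ T^[N] '' C = ∅ := by
  obtain ⟨hLm, hcert⟩ := h
  refine eq_empty_iff_forall_notMem.2 ?_
  rintro _ ⟨hw, x, hxC, rfl⟩
  have hx : (prefixWord x m).take L ∈ prefixesOf C L := by
    rw [take_prefixWord x hLm, mem_prefixesOf]
    exact ⟨x, hxC, rfl⟩
  obtain ⟨hlen, hne⟩ := hcert _ ((mem_words 𝒜).2 (length_prefixWord x m)) hx
  rw [iterate_imagePrefix_prefixWord hT, length_prefixWord] at hlen
  rw [iterate_imagePrefix_prefixWord hT, take_prefixWord _ hlen] at hne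
  exact hne (mem_cyl_iff_prefixWord.1 hw)

theorem exists_excludes_of_inter_iterate_image_eq_empty
    (hT : ∀ x n, T x n = β n (prefixWord x (α n + 1)))
    (hL : ∀ x y, prefixWord x L = prefixWord y L → x ∈ C → y ∈ C)
    (h : cyl w ∩ T^[N] '' C = ∅) : ∃ m, Excludes α β C L w N m := by
  obtain ⟨m, hwm, hLm⟩ := ((tendsto_determinedLength.iterate N).eventually_ge_atTop w.length
    |>.and (eventually_ge_atTop L)).exists
  refine ⟨m, hLm, fun u hu huC => ?_⟩
  rw [mem_words] at hu
  obtain ⟨x, hxC, hx⟩ := mem_prefixesOf.1 huC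
  set y : ℕ → 𝒜 := fun i => u.getD i (x i)
  have hyu : prefixWord y m = u := by rw [prefixWord_getD u x hu.ge, ← hu, List.take_length]
  have hyC : y ∈ C := hL x y (by rw [hx, prefixWord_getD u x (hu ▸ hLm)]) hxC
  rw [← hyu, iterate_imagePrefix_prefixWord hT, length_prefixWord, take_prefixWord _ hwm]
  exact ⟨hwm, fun hw =>
    eq_empty_iff_forall_notMem.1 h _ ⟨mem_cyl_iff_prefixWord.2 hw, y, hyC, rfl⟩⟩

open Computable in
theorem computablePred_excludes [Primcodable 𝒜] (hα : Computable α) (hβ : Computable₂ β)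
    (C : Set (ℕ → 𝒜)) (L : ℕ) :
    ComputablePred fun p : List 𝒜 × ℕ × ℕ => Excludes α β C L p.1 p.2.1 p.2.2 := by
  have hmem : PrimrecPred fun s : List 𝒜 => s ∈ prefixesOf C L :=
    ((PrimrecRel.exists_mem_list Primrec.eq).comp (.const (prefixesOf C L)) .id).of_eq
      fun s => by simp
  have hcheck : PrimrecPred fun q : List 𝒜 × List 𝒜 × List 𝒜 =>
      q.2.1.take L ∈ prefixesOf C L →
        q.1.length ≤ q.2.2.length ∧ q.2.2.take q.1.length ≠ q.1 :=
    ((hmem.comp (Primrec.list_take.comp (.const L) (Primrec.fst.comp .snd))).not.or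
      ((Primrec.nat_le.comp (Primrec.list_length.comp .fst)
        (Primrec.list_length.comp (Primrec.snd.comp .snd))).and
      (Primrec.eq.comp (Primrec.list_take.comp (Primrec.list_length.comp .fst)
        (Primrec.snd.comp .snd)) .fst).not)).of_eq fun q => imp_iff_not_or.symm
  exact (Primrec.nat_le.comp (.const L) (Primrec.snd.comp .snd)).computablePred.and <|
    ComputablePred.forall_mem_list ((primrec_words 𝒜).to_comp.comp (snd.comp snd)) <|
      hcheck.computablePred.comp <| (fst.comp fst).pair <| snd.pair <|
        (computable_iterate_imagePrefix hα hβ).comp (fst.comp (snd.comp fst)) snd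

end Certificate

theorem stmt8_general {𝒜 : Type} [Fintype 𝒜] [Primcodable 𝒜]
    [TopologicalSpace 𝒜] [DiscreteTopology 𝒜]
    {T : (ℕ → 𝒜) → (ℕ → 𝒜)} (hT : CantorComputable T)
    {A : Set (ℕ → 𝒜)}
    (hstrong : StronglyAttracting T A) :
    SigmaOne {w : List 𝒜 | cyl w ∩ A = ∅} := by
  obtain ⟨α, β, hα, hβ, hTβ⟩ := hT
  have hTc : Continuous T := continuous_of_apply_eq_prefixWord hTβ
  obtain ⟨C, hC, hTC, rfl⟩ := hstrong.exists_isClopen hTc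
  obtain ⟨L, hL⟩ := hC.exists_prefixWord_determined
  refine sigmaOne_of_computablePred (computablePred_excludes hα hβ C L) fun w => ?_
  rw [mem_ofPred_eq, (isClosed_cyl w).isCompact.inter_iInter_iterate_image_eq_empty_iff hTc
    hC.isClosed.isCompact hTC]
  exact exists_congr fun N => ⟨exists_excludes_of_inter_iterate_image_eq_empty hTβ hL,
    fun ⟨_, h⟩ => h.inter_iterate_image_eq_empty hTβ⟩

/-- A strongly attracting closed invariant set of a computable map of Cantor space is Π₁:
its outer collection of cylinders is Σ₁ (r.e.). -/
theorem stmt8 {𝒜 : Type} [Fintype 𝒜] [Primcodable 𝒜]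
    [TopologicalSpace 𝒜] [DiscreteTopology 𝒜]
    {T : (ℕ → 𝒜) → (ℕ → 𝒜)} (hT : CantorComputable T)
    {A : Set (ℕ → 𝒜)} (hclosed : IsClosed A) (hinv : Set.MapsTo T A A)
    (hstrong : StronglyAttracting T A) :
    SigmaOne {w : List 𝒜 | cyl w ∩ A = ∅} :=
  stmt8_general hT hstrong
end

section
/- Let Halt = {l ∈ ℕ : M_l halts on input 0}, let A ⊆ X = ℕ → {0,1} be the subshift of all sequences containing no factor 0 1^l 0 with l ∈ Halt (i.e. there are no j ∈ ℕ and l ≥ 1 with l ∈ Halt, x_j = 0, x_{j+l+1} = 0 and x_k = 1 for all j < k < j+l+1), and let T : X → X be defined coordinatewise by: T(x)_i = 0 if there exist j₁, j₂ with j₁ ≤ i < j₂ ≤ 2i such that x_{j₁} = 0, x_{j₂} = 0, x_k = 1 for all j₁ < k < j₂, the number l = j₂ − j₁ − 1 satisfies 1 ≤ l ≤ j₁, and M_l halts on input 0 within j₁ computation steps; otherwise T(x)_i = x_{i+1}. Then ⋂_{n∈ℕ} T^n(X) = A; in particular ω(x) ⊆ A for every x ∈ X. -/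
open Filter Topology MeasureTheory Set
open scoped ENNReal NNReal

/-- The subshift of `{0,1}^ℕ` avoiding all factors `0 1^l 0` with `l ∈ Halt`. -/
def A12 : Set (ℕ → Fin 2) :=
  {x | ¬ ∃ (j l : ℕ), 1 ≤ l ∧ l ∈ HaltSet ∧ x j = 0 ∧ x (j + l + 1) = 0 ∧
        ∀ k, j < k → k < j + l + 1 → x k = 1}

open Classical in
/-- The map of Theorem `stmt12`: erase blocks of 1's whose length is the index of a halting
machine (with time/position bounds), then shift. -/
noncomputable def T12 : (ℕ → Fin 2) → (ℕ → Fin 2) := fun x i =>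
  if ∃ j₁ j₂ : ℕ, j₁ ≤ i ∧ i < j₂ ∧ j₂ ≤ 2 * i ∧
      x j₁ = 0 ∧ x j₂ = 0 ∧ (∀ k, j₁ < k → k < j₂ → x k = 1) ∧
      1 ≤ j₂ - j₁ - 1 ∧ j₂ - j₁ - 1 ≤ j₁ ∧
      (Nat.Partrec.Code.evaln j₁
        (Denumerable.ofNat Nat.Partrec.Code (j₂ - j₁ - 1)) 0).isSome = true
  then 0 else x (i + 1)

/-
Read backwards, `T₁₂` is the shift: a block `0 1^L 0` at position `p` of `T₁₂ z` comes from a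
block at `p + 1` of `z`, of the same length unless `T₁₂` cut a certified block of length `p + 1`
down to `0 1 0`. Tracing a block `0 1^l 0` with `l ∈ Halt` back `n` steps, its length therefore
stays `l` or becomes a certified length not exceeding its position. Once the position exceeds
`l` and the halting time of `M_l`, the block is certified and `T₁₂` erases it within two steps,
contradicting that its image still shows it. So such blocks are absent from `T₁₂ⁿ(X)` for large
`n`, hence (being open conditions) from its closure, which contains every ω-limit set.
Conversely, prepending a `1` to a point of `A₁₂` gives a preimage in `A₁₂`.
-/

theorem omegaSet_subset_closure_range_iterate {X : Type*} [TopologicalSpace X] (T : X → X)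
    (x : X) (N : ℕ) : omegaSet T x ⊆ closure (range T^[N]) := fun y hy =>
  closure_mono (by
    rintro _ ⟨n, hn, rfl⟩
    exact ⟨T^[n - N] x, by rw [← Function.iterate_add_apply, Nat.add_sub_cancel' hn]⟩)
    (mapClusterPt_atTop_iff_forall_mem_closure.mp hy N)

def HaltsWithin (s e : ℕ) : Prop :=
  (Nat.Partrec.Code.evaln s (Denumerable.ofNat Nat.Partrec.Code e) 0).isSome = true

theorem HaltsWithin.mono {s s' e : ℕ} (h : HaltsWithin s e) (hs : s ≤ s') : HaltsWithin s' e := by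
  obtain ⟨a, ha⟩ := Option.isSome_iff_exists.mp h
  exact Option.isSome_iff_exists.mpr ⟨a, Nat.Partrec.Code.evaln_mono hs ha⟩

theorem HaltsWithin.mem_haltSet {s e : ℕ} (h : HaltsWithin s e) : e ∈ HaltSet := by
  obtain ⟨a, ha⟩ := Option.isSome_iff_exists.mp h
  exact Part.dom_iff_mem.mpr ⟨a, Nat.Partrec.Code.evaln_sound ha⟩

theorem exists_haltsWithin_of_mem_haltSet {e : ℕ} (h : e ∈ HaltSet) : ∃ s, HaltsWithin s e := by
  obtain ⟨a, ha⟩ := Part.dom_iff_mem.mp h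
  obtain ⟨s, hs⟩ := Nat.Partrec.Code.evaln_complete.mp ha
  exact ⟨s, Option.isSome_iff_exists.mpr ⟨a, hs⟩⟩

def HasBlock (y : ℕ → Fin 2) (p L : ℕ) : Prop :=
  y p = 0 ∧ y (p + L + 1) = 0 ∧ ∀ k, p < k → k < p + L + 1 → y k = 1

theorem isOpen_setOf_hasBlock (p L : ℕ) : IsOpen {y : ℕ → Fin 2 | HasBlock y p L} := by
  have hcoord : ∀ (i : ℕ) (c : Fin 2), IsOpen {y : ℕ → Fin 2 | y i = c} := fun i c =>
    show IsOpen ((fun y : ℕ → Fin 2 => y i) ⁻¹' {c}) from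
      (continuous_apply i).isOpen_preimage _ (isOpen_discrete _)
  have hones : IsOpen (⋂ k ∈ Ioo p (p + L + 1), {y : ℕ → Fin 2 | y k = 1}) :=
    (finite_Ioo _ _).isOpen_biInter fun k _ => hcoord k 1
  convert ((hcoord p 0).inter (hcoord (p + L + 1) 0)).inter hones using 1
  ext y
  simp only [HasBlock, mem_ofPred_eq, mem_inter_iff, mem_iInter, mem_Ioo]
  tauto

/-- The condition of `T12`, with `(j₁, j₂)` written as `(j, j + L + 1)`. -/
def ErasesAt (z : ℕ → Fin 2) (i : ℕ) : Prop :=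
  ∃ j L, j ≤ i ∧ i < j + L + 1 ∧ j + L + 1 ≤ 2 * i ∧ 1 ≤ L ∧ L ≤ j ∧ HaltsWithin j L ∧
    HasBlock z j L

theorem erasesAt_iff {z : ℕ → Fin 2} {i : ℕ} :
    ErasesAt z i ↔ ∃ j₁ j₂ : ℕ, j₁ ≤ i ∧ i < j₂ ∧ j₂ ≤ 2 * i ∧
      z j₁ = 0 ∧ z j₂ = 0 ∧ (∀ k, j₁ < k → k < j₂ → z k = 1) ∧
      1 ≤ j₂ - j₁ - 1 ∧ j₂ - j₁ - 1 ≤ j₁ ∧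
      (Nat.Partrec.Code.evaln j₁
        (Denumerable.ofNat Nat.Partrec.Code (j₂ - j₁ - 1)) 0).isSome = true := by
  constructor
  · rintro ⟨j, L, hji, hij, hi2, hL, hLj, hhalt, hj, hjL, hones⟩
    have hlen : j + L + 1 - j - 1 = L := by omega
    refine ⟨j, j + L + 1, hji, hij, hi2, hj, hjL, hones, by omega, by omega, ?_⟩
    rw [hlen]
    exact hhalt
  · rintro ⟨j₁, j₂, hji, hij, hi2, hj₁, hj₂, hones, hL, hLj, hhalt⟩
    have hend : j₁ + (j₂ - j₁ - 1) + 1 = j₂ := by omega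
    refine ⟨j₁, j₂ - j₁ - 1, hji, by omega, by omega, hL, hLj, hhalt, hj₁, ?_,
      fun k hk hk' => hones k hk (by omega)⟩
    rw [hend]
    exact hj₂

theorem T12_apply_of_erasesAt {z : ℕ → Fin 2} {i : ℕ} (h : ErasesAt z i) : T12 z i = 0 :=
  if_pos (erasesAt_iff.mp h)

theorem T12_apply_of_not_erasesAt {z : ℕ → Fin 2} {i : ℕ} (h : ¬ ErasesAt z i) :
    T12 z i = z (i + 1) :=
  if_neg (mt erasesAt_iff.mpr h)

theorem T12_apply_eq_one {z : ℕ → Fin 2} {i : ℕ} (h : T12 z i = 1) :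
    ¬ ErasesAt z i ∧ z (i + 1) = 1 := by
  by_cases he : ErasesAt z i
  · exact absurd ((T12_apply_of_erasesAt he).symm.trans h) (by decide)
  · exact ⟨he, (T12_apply_of_not_erasesAt he).symm.trans h⟩

theorem not_hasBlock_T12_of_hasBlock {z : ℕ → Fin 2} {p L L' : ℕ} (hL : 1 ≤ L) (hLp : L ≤ p)
    (hhalt : HaltsWithin (p + 1) L) (hz : HasBlock z (p + 1) L) (hL' : 1 ≤ L') :
    ¬ HasBlock (T12 z) p L' := by
  rintro ⟨-, -, hones⟩
  have herase : ErasesAt z (p + 1) :=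
    ⟨p + 1, L, le_rfl, by omega, by omega, hL, by omega, hhalt, hz⟩
  exact absurd ((T12_apply_of_erasesAt herase).symm.trans (hones (p + 1) (by omega) (by omega)))
    (by decide)

theorem apply_succ_eq_zero_of_T12_apply_eq_zero {z : ℕ → Fin 2} {p : ℕ} (h : T12 z p = 0)
    (hnext : ¬ ErasesAt z (p + 1)) : z (p + 1) = 0 := by
  by_cases he : ErasesAt z p
  · obtain ⟨j, L, hjp, hpj, hp2, hL, hLj, hhalt, hblock⟩ := he
    -- otherwise the same block would also erase position `p + 1`
    have hend : j + L + 1 = p + 1 := by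
      by_contra hne
      exact hnext ⟨j, L, by omega, by omega, by omega, hL, hLj, hhalt, hblock⟩
    exact hend ▸ hblock.2.1
  · exact (T12_apply_of_not_erasesAt he).symm.trans h

/-- In the second case `T12` cut a block of length `p + 1` down to `0 1 0`. -/
theorem HasBlock.of_T12 {z : ℕ → Fin 2} {p L : ℕ} (hL : 1 ≤ L) (h : HasBlock (T12 z) p L) :
    ∃ L', HasBlock z (p + 1) L' ∧ (L' = L ∨ (L = 1 ∧ L' = p + 1 ∧ HaltsWithin (p + 1) L')) := by
  obtain ⟨hp, hend, hones⟩ := h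
  have hz1 : ∀ k, p + 1 < k → k < p + 1 + L + 1 → z k = 1 := fun k hk hk' => by
    simpa [Nat.sub_add_cancel (by omega : 1 ≤ k)] using
      (T12_apply_eq_one (hones (k - 1) (by omega) (by omega))).2
  have hkeep : ∀ m, p < m → m < p + L + 1 → ¬ ErasesAt z m := fun m hm hm' =>
    (T12_apply_eq_one (hones m hm hm')).1
  have hz0 : z (p + 1) = 0 :=
    apply_succ_eq_zero_of_T12_apply_eq_zero hp (hkeep _ (by omega) (by omega))
  by_cases he : ErasesAt z (p + L + 1)
  · obtain ⟨j, L', hji, hij, hi2, hL', hL'j, hhalt, hblock⟩ := he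
    have hj : j = p + 1 := by
      rcases Nat.lt_trichotomy j (p + 1) with hlt | heq | hgt
      · exact absurd (hz0.symm.trans (hblock.2.2 _ hlt (by omega))) (by decide)
      · exact heq
      · exact absurd (hblock.1.symm.trans (hz1 j hgt (by omega))) (by decide)
    subst hj
    -- the erasing block must not reach back to position `p + L`, which pins down both lengths
    have hfar : 2 * (p + L) < p + 1 + L' + 1 := by
      by_contra hle
      exact hkeep (p + L) (by omega) (by omega)
        ⟨p + 1, L', by omega, by omega, by omega, hL', hL'j, hhalt, hblock⟩
    have hL1 : L = 1 := by omega
    have hL'p : L' = p + 1 := by omega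
    exact ⟨L', hblock, Or.inr ⟨hL1, hL'p, hhalt⟩⟩
  · refine ⟨L, ⟨hz0, ?_, hz1⟩, Or.inl rfl⟩
    have hshift : p + 1 + L + 1 = p + L + 1 + 1 := by omega
    rw [hshift, ← T12_apply_of_not_erasesAt he]
    exact hend

theorem HasBlock.of_T12_iterate {x : ℕ → Fin 2} {p L n : ℕ} (hL : 1 ≤ L)
    (h : HasBlock (T12^[n] x) p L) :
    ∃ L', HasBlock x (p + n) L' ∧ (L' = L ∨ (1 ≤ L' ∧ L' ≤ p + n ∧ HaltsWithin (p + n) L')) := by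
  induction n generalizing x with
  | zero => exact ⟨L, h, Or.inl rfl⟩
  | succ n ih =>
    rw [Function.iterate_succ_apply] at h
    obtain ⟨L₁, h₁, hL₁⟩ := ih h
    have hL₁pos : 1 ≤ L₁ := by rcases hL₁ with rfl | ⟨hpos, -⟩ <;> assumption
    obtain ⟨L₂, h₂, hL₂⟩ := h₁.of_T12 hL₁pos
    refine ⟨L₂, by rwa [← add_assoc], ?_⟩
    rcases hL₂ with rfl | ⟨-, rfl, hhalt⟩
    · rcases hL₁ with rfl | ⟨hpos, hle, hhalt⟩
      · exact Or.inl rfl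
      · exact Or.inr ⟨hpos, by omega, hhalt.mono (by omega)⟩
    · exact Or.inr ⟨by omega, by omega, by rwa [← add_assoc]⟩

/-- Either the block survives one step and is then erased at once, or it came from a block of
length `q + 1` at `q + 2`, which is erased at once. -/
theorem not_hasBlock_T12_T12 {z : ℕ → Fin 2} {q L : ℕ} (hL : 1 ≤ L) (hLq : L ≤ q)
    (hhalt : HaltsWithin q L) : ¬ HasBlock (T12 (T12 z)) q L := by
  intro h
  obtain ⟨L₁, h₁, rfl | ⟨rfl, rfl, hhalt₁⟩⟩ := h.of_T12 hL
  · exact not_hasBlock_T12_of_hasBlock hL hLq (hhalt.mono (by omega)) h₁ hL h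
  · obtain ⟨L₂, h₂, rfl | ⟨hq, -⟩⟩ := h₁.of_T12 (by omega)
    · exact not_hasBlock_T12_of_hasBlock (by omega) le_rfl (hhalt₁.mono (by omega)) h₂
        (by omega) h₁
    · omega

theorem not_hasBlock_T12_iterate {x : ℕ → Fin 2} {j l s : ℕ} (hl : 1 ≤ l)
    (hhalt : HaltsWithin s l) : ¬ HasBlock (T12^[l + s + 2] x) j l := by
  intro h
  rw [Function.iterate_add_apply] at h
  obtain ⟨L, hblock, hL⟩ := h.of_T12_iterate hl
  rcases hL with rfl | ⟨hL, hLle, hhaltL⟩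
  · exact not_hasBlock_T12_T12 hl (by omega) (hhalt.mono (by omega)) hblock
  · exact not_hasBlock_T12_T12 hL hLle hhaltL hblock

theorem iInter_closure_range_T12_iterate_subset :
    ⋂ n, closure (range T12^[n]) ⊆ A12 := by
  rintro y hy ⟨j, l, hl, hHalt, hblock⟩
  obtain ⟨s, hhalt⟩ := exists_haltsWithin_of_mem_haltSet hHalt
  obtain ⟨_, hblock', x, rfl⟩ := mem_closure_iff.mp (mem_iInter.mp hy (l + s + 2))
    _ (isOpen_setOf_hasBlock j l) hblock
  exact not_hasBlock_T12_iterate hl hhalt hblock'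

def consSeq (a : Fin 2) (y : ℕ → Fin 2) : ℕ → Fin 2
  | 0 => a
  | k + 1 => y k

/-- No block starting at position `0` is ever erased. -/
theorem T12_consSeq {y : ℕ → Fin 2} (hy : y ∈ A12) (a : Fin 2) : T12 (consSeq a y) = y := by
  funext i
  refine T12_apply_of_not_erasesAt ?_
  rintro ⟨_ | j, L, hji, hij, hi2, hL, hLj, hhalt, hz, hzL, hones⟩
  · omega
  · refine hy ⟨j, L, hL, hhalt.mem_haltSet, hz, ?_,
      fun k hk hk' => hones (k + 1) (by omega) (by omega)⟩
    rwa [show j + 1 + L + 1 = j + L + 1 + 1 by omega] at hzL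

theorem consSeq_one_mem_A12 {y : ℕ → Fin 2} (hy : y ∈ A12) : consSeq 1 y ∈ A12 := by
  rintro ⟨_ | j, l, hl, hHalt, hz, hzl, hones⟩
  · exact (by decide : (1 : Fin 2) ≠ 0) hz
  · refine hy ⟨j, l, hl, hHalt, hz, ?_, fun k hk hk' => hones (k + 1) (by omega) (by omega)⟩
    rwa [show j + 1 + l + 1 = j + l + 1 + 1 by omega] at hzl

theorem surjOn_T12_A12 : SurjOn T12 A12 A12 := fun y hy =>
  ⟨consSeq 1 y, consSeq_one_mem_A12 hy, T12_consSeq hy 1⟩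

/-- `⋂ₙ T₁₂ⁿ({0,1}^ℕ) = A₁₂`; in particular `ω(x) ⊆ A₁₂` for every `x`. -/
theorem stmt12 :
    (⋂ n : ℕ, T12^[n] '' Set.univ) = A12 ∧
    ∀ x : ℕ → Fin 2, omegaSet T12 x ⊆ A12 := by
  refine ⟨Subset.antisymm ?_ ?_, fun x => ?_⟩
  · simp only [image_univ]
    exact (iInter_mono fun n => subset_closure).trans iInter_closure_range_T12_iterate_subset
  · exact subset_iInter fun n =>
      (surjOn_T12_A12.iterate n).mono (subset_univ A12) le_rfl
  · exact (subset_iInter fun n => omegaSet_subset_closure_range_iterate T12 x n).trans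
      iInter_closure_range_T12_iterate_subset
end
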